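/- arXiv:2502.08194 — 2 statements merged into one kernel-verified Lean document; each statement's English description precedes it below -/
import Mathlib

section
/- Fractional chain-rule inequality (Alikhanov): Let 0 < α < 1, T > 0, and let w : [0,T] → ℝ be continuously differentiable. Then for every t ∈ (0,T], the pointwise inequality w(t) · (D^α w)(t) ≥ (1/2) · (D^α (w²))(t) holds, i.e. (1/Γ(1−α)) ∫₀ᵗ (t−s)^{−α} w(s)·w′(s) − (1/2)(w²)′(s) ds ≥ 0; equivalently, since (w²)′ = 2 w w′, one has ∫₀ᵗ (t−s)^{−α} ( w(t) − w(s) ) w′(s) ds ≥ 0. -/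
/-!
Write `φ(s) = (w t - w s)² / 2 ≥ 0`, so that the integrand is `-(t - s)^(-α) φ'(s)`. Integrating
by parts on `[a, u]` with `u < t`, the boundary term at `a` and the integral of `φ` against the
derivative `α (t - s)^(-α-1) ≥ 0` of the kernel are nonnegative, so the integral up to `u` is at
least `-(t - u)^(-α) φ(u)`. Since `φ(u) = O((t - u)²)`, this lower bound tends to `0` as `u → t⁻`.
-/

open MeasureTheory intervalIntegral

/-- The Djrbashian–Caputo fractional derivative of order `α ∈ (0,1)` of a
continuously differentiable function `f`:
`(D^α f)(t) = (1/Γ(1−α)) ∫₀ᵗ (t−s)^{−α} f′(s) ds`. -/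
noncomputable def caputoDeriv (α : ℝ) (f : ℝ → ℝ) (t : ℝ) : ℝ :=
  (1 / Real.Gamma (1 - α)) * ∫ s in (0:ℝ)..t, (t - s) ^ (-α) * deriv f s

open Set Filter Topology

theorem tendsto_rpow_neg_mul_sq_sub_nhdsLT {w : ℝ → ℝ} {t α : ℝ} (hw : DifferentiableAt ℝ w t)
    (hα : α < 2) : Tendsto (fun u => (t - u) ^ (-α) * (w t - w u) ^ 2) (𝓝[<] t) (𝓝 0) := by
  have hslope : Tendsto (slope w t) (𝓝[<] t) (𝓝 (deriv w t)) :=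
    (hasDerivAt_iff_tendsto_slope.1 hw.hasDerivAt).mono_left
      (nhdsWithin_mono _ fun _ hu => ne_of_lt hu)
  have hpow : Tendsto (fun u => (t - u) ^ (2 - α)) (𝓝[<] t) (𝓝 0) := by
    have h := ((continuous_const.sub continuous_id).rpow_const (f := fun u : ℝ => t - u)
      fun _ => Or.inr (sub_pos.2 hα).le).tendsto t
    rw [sub_self, Real.zero_rpow (sub_pos.2 hα).ne'] at h
    exact h.mono_left nhdsWithin_le_nhds
  have hfactor : ∀ u ∈ Iio t,
      slope w t u ^ 2 * (t - u) ^ (2 - α) = (t - u) ^ (-α) * (w t - w u) ^ 2 := by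
    intro u hu
    have htu : 0 < t - u := sub_pos.2 hu
    rw [slope_def_field, sub_eq_neg_add 2 α, Real.rpow_add htu, Real.rpow_two,
      div_pow, ← neg_sub t u, neg_sq, ← neg_sub (w t) (w u), neg_sq]
    field_simp
  have h := (hslope.pow 2).mul hpow
  rw [mul_zero] at h
  exact h.congr' (eventually_nhdsWithin_of_forall hfactor)

theorem neg_mul_le_neg_integral_mul_deriv_of_deriv_nonneg {k k' φ φ' : ℝ → ℝ} {a b : ℝ}
    (hab : a ≤ b) (hk : ∀ x ∈ Icc a b, HasDerivAt k (k' x) x)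
    (hφ : ∀ x ∈ Icc a b, HasDerivAt φ (φ' x) x)
    (hk'int : IntervalIntegrable k' volume a b) (hφ'int : IntervalIntegrable φ' volume a b)
    (hka : 0 ≤ k a) (hk' : ∀ x ∈ Icc a b, 0 ≤ k' x) (hφ0 : ∀ x ∈ Icc a b, 0 ≤ φ x) :
    -(k b * φ b) ≤ -∫ x in a..b, k x * φ' x := by
  rw [← uIcc_of_le hab] at hk hφ
  rw [integral_mul_deriv_eq_deriv_mul hk hφ hk'int hφ'int]
  have hk'φ : 0 ≤ ∫ x in a..b, k' x * φ x :=
    integral_nonneg hab fun x hx => mul_nonneg (hk' x hx) (hφ0 x hx)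
  linarith [mul_nonneg hka (hφ0 a (left_mem_Icc.2 hab))]

theorem hasDerivAt_const_sub_rpow {t x : ℝ} (p : ℝ) (hx : x < t) :
    HasDerivAt (fun s => (t - s) ^ p) (-(p * (t - x) ^ (p - 1))) x := by
  simpa using ((hasDerivAt_id x).const_sub t).rpow_const (p := p) (Or.inl (sub_pos.2 hx).ne')

theorem intervalIntegrable_const_sub_rpow_mul {g : ℝ → ℝ} {α a b t : ℝ} (hα : α < 1)
    (hg : ContinuousOn g (uIcc a b)) :
    IntervalIntegrable (fun s => (t - s) ^ (-α) * g s) volume a b := by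
  have hk : IntervalIntegrable (fun s => (t - s) ^ (-α)) volume a b := by
    simpa using (intervalIntegrable_rpow' (a := t - a) (b := t - b)
      (by linarith : -1 < -α)).comp_sub_left t
  exact hk.mul_continuousOn hg

theorem integral_const_sub_rpow_mul_sub_mul_deriv_nonneg {w : ℝ → ℝ} {α a t : ℝ}
    (hα0 : 0 ≤ α) (hα1 : α < 1) (hat : a < t) (hw : ContDiff ℝ 1 w) :
    0 ≤ ∫ s in a..t, (t - s) ^ (-α) * ((w t - w s) * deriv w s) := by
  have hwd : Differentiable ℝ w := hw.differentiable one_ne_zero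
  have hg : Continuous fun s => (w t - w s) * deriv w s :=
    (continuous_const.sub hw.continuous).mul (hw.continuous_deriv le_rfl)
  have hφ : ∀ x, HasDerivAt (fun s => (w t - w s) ^ 2 / 2) (-((w t - w x) * deriv w x)) x := by
    intro x
    refine ((((hwd x).hasDerivAt.const_sub (w t)).fun_pow 2).div_const 2).congr_deriv ?_
    push_cast
    ring
  set Φ := fun u => ∫ s in a..u, (t - s) ^ (-α) * ((w t - w s) * deriv w s)
  have hΦ : Tendsto Φ (𝓝[<] t) (𝓝 (Φ t)) := by
    have hcont := continuousOn_primitive_interval'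
      (intervalIntegrable_const_sub_rpow_mul (t := t) hα1 hg.continuousOn)
      (left_mem_uIcc (a := a) (b := t))
    refine (hcont t right_mem_uIcc).tendsto.mono_left (nhdsWithin_le_of_mem ?_)
    rw [uIcc_of_lt hat]
    exact Icc_mem_nhdsLT hat
  have hbound : ∀ u ∈ Ioo a t, -((t - u) ^ (-α) * ((w t - w u) ^ 2 / 2)) ≤ Φ u := by
    intro u hu
    have hk' : ContinuousOn (fun x => -(-α * (t - x) ^ (-α - 1))) (Icc a u) :=
      ((continuousOn_const.sub continuousOn_id).rpow_const
        fun x hx => Or.inl (sub_pos.2 (hx.2.trans_lt hu.2)).ne').const_mul _ |>.neg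
    have := neg_mul_le_neg_integral_mul_deriv_of_deriv_nonneg hu.1.le
      (fun x hx => hasDerivAt_const_sub_rpow (-α) (hx.2.trans_lt hu.2)) (fun x _ => hφ x)
      (hk'.intervalIntegrable_of_Icc hu.1.le) (hg.neg.intervalIntegrable a u)
      (Real.rpow_nonneg (sub_pos.2 hat).le _)
      (fun x hx => by
        rw [neg_mul, neg_neg]
        exact mul_nonneg hα0 (Real.rpow_nonneg (sub_pos.2 (hx.2.trans_lt hu.2)).le _))
      (fun x _ => by positivity)
    simpa only [mul_neg, intervalIntegral.integral_neg, neg_neg] using this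
  have hlim : Tendsto (fun u => -((t - u) ^ (-α) * ((w t - w u) ^ 2 / 2))) (𝓝[<] t) (𝓝 0) := by
    simpa [mul_div_assoc] using
      ((tendsto_rpow_neg_mul_sq_sub_nhdsLT (hwd t) (by linarith)).div_const 2).neg
  exact le_of_tendsto_of_tendsto hlim hΦ (eventually_of_mem (Ioo_mem_nhdsLT hat) hbound)

theorem mul_caputoDeriv_sub_half_caputoDeriv_sq {w : ℝ → ℝ} {α t : ℝ} (hα : α < 1)
    (hw : ContDiff ℝ 1 w) :
    w t * caputoDeriv α w t - 1 / 2 * caputoDeriv α (fun s => w s ^ 2) t =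
      1 / Real.Gamma (1 - α) * ∫ s in (0:ℝ)..t, (t - s) ^ (-α) * ((w t - w s) * deriv w s) := by
  have hwd : Differentiable ℝ w := hw.differentiable one_ne_zero
  have hw' : Continuous (deriv w) := hw.continuous_deriv le_rfl
  have hderiv_sq : deriv (fun s => w s ^ 2) = fun s => 2 * w s * deriv w s := by
    ext s
    simpa using ((hwd s).hasDerivAt.fun_pow 2).deriv
  have hsplit : (∫ s in (0:ℝ)..t, (t - s) ^ (-α) * ((w t - w s) * deriv w s)) =
      w t * (∫ s in (0:ℝ)..t, (t - s) ^ (-α) * deriv w s) -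
        ∫ s in (0:ℝ)..t, (t - s) ^ (-α) * (w s * deriv w s) := by
    rw [← intervalIntegral.integral_const_mul, ← integral_sub
      ((intervalIntegrable_const_sub_rpow_mul (t := t) hα hw'.continuousOn).const_mul (w t))
      (intervalIntegrable_const_sub_rpow_mul (g := fun s => w s * deriv w s) (t := t) hα
        (hw.continuous.mul hw').continuousOn)]
    congr 1 with s
    ring
  have hsq : (∫ s in (0:ℝ)..t, (t - s) ^ (-α) * deriv (fun s => w s ^ 2) s) =
      2 * ∫ s in (0:ℝ)..t, (t - s) ^ (-α) * (w s * deriv w s) := by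
    rw [hderiv_sq, ← intervalIntegral.integral_const_mul]
    congr 1 with s
    ring
  rw [caputoDeriv, caputoDeriv, hsq, hsplit]
  ring

theorem fractional_chain_rule_inequality_general
    (α T : ℝ) (hα0 : 0 < α) (hα1 : α < 1)
    (w : ℝ → ℝ) (hw : ContDiff ℝ 1 w) :
    ∀ t ∈ Set.Ioc (0:ℝ) T,
      w t * caputoDeriv α w t ≥ (1/2) * caputoDeriv α (fun s => (w s)^2) t ∧
      0 ≤ ∫ s in (0:ℝ)..t, (t - s) ^ (-α) * ((w t - w s) * deriv w s) := by
  intro t ht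
  have hnonneg := integral_const_sub_rpow_mul_sub_mul_deriv_nonneg hα0.le hα1 ht.1 hw
  refine ⟨?_, hnonneg⟩
  have hΓ : 0 ≤ 1 / Real.Gamma (1 - α) :=
    (one_div_pos.2 (Real.Gamma_pos_of_pos (sub_pos.2 hα1))).le
  rw [ge_iff_le, ← sub_nonneg, mul_caputoDeriv_sub_half_caputoDeriv_sq hα1 hw]
  exact mul_nonneg hΓ hnonneg

/-- Fractional chain-rule inequality (Alikhanov):
`w(t) · (D^α w)(t) ≥ ½ (D^α (w²))(t)` pointwise on `(0,T]`, equivalently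
`∫₀ᵗ (t−s)^{−α} (w(t) − w(s)) w′(s) ds ≥ 0`. -/
theorem fractional_chain_rule_inequality
    (α T : ℝ) (hα0 : 0 < α) (hα1 : α < 1) (hT : 0 < T)
    (w : ℝ → ℝ) (hw : ContDiff ℝ 1 w) :
    ∀ t ∈ Set.Ioc (0:ℝ) T,
      w t * caputoDeriv α w t ≥ (1/2) * caputoDeriv α (fun s => (w s)^2) t ∧
      0 ≤ ∫ s in (0:ℝ)..t, (t - s) ^ (-α) * ((w t - w s) * deriv w s) :=
  fractional_chain_rule_inequality_general α T hα0 hα1 w hw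
end

section
/- Second-sound (thermal wave) reformulation of the linear Jordan–Moore–Gibson–Thompson equation: Let n ≥ 1, τ > 0, δ > 0, c > 0, set b = δ + τc², k = c²/b and γ = 1/τ − k. Suppose ψ : ℝ × ℝⁿ → ℝ is three times continuously differentiable and satisfies pointwise the linear MGT equation τ ψ_ttt + ψ_tt − c² Δψ − b Δψ_t = 0 (where Δ acts in the spatial variables and subscripts t denote time derivatives). Then γ > 0, and the auxiliary function z := ψ_t + k ψ satisfies pointwise the weakly damped wave equation z_tt − (c² + δ/τ) Δz + γ z_t = γ k ( z − k ψ ), whose right-hand side contains no derivatives of z or ψ. -/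
open scoped BigOperators

/-!
With `z = ψ_t + kψ`, linearity of `∂_t` and `Δ` on the `C³` function `ψ` turns
`z_tt − (b/τ) Δz + γ z_t` into `ψ_ttt + ψ_tt/τ − (b/τ) Δψ_t − (kb/τ) Δψ + γ k ψ_t`.
Dividing the MGT equation by `τ` cancels all but the last term, because `kb = c²`.
Positivity of `γ` is `τc² < b`, i.e. `δ > 0`.
-/

/-- Partial derivative in the time variable of a function `u(t,x)`. -/
noncomputable def timeDeriv {n : ℕ} (u : ℝ → (Fin n → ℝ) → ℝ) : ℝ → (Fin n → ℝ) → ℝ :=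
  fun t x => deriv (fun τ => u τ x) t

/-- Spatial Laplacian `Δu(x) = Σ_{i=1}^n ∂²u/∂x_i²(x)` of `u : ℝⁿ → ℝ`. -/
noncomputable def lap {n : ℕ} (u : (Fin n → ℝ) → ℝ) (x : Fin n → ℝ) : ℝ :=
  ∑ i : Fin n, iteratedDeriv 2 (fun s => u (Function.update x i s)) (x i)

open Function

section Slices

variable {n : ℕ} {u v : ℝ → (Fin n → ℝ) → ℝ}

theorem hasDerivAt_time_slice (hu : Differentiable ℝ (uncurry u)) (t : ℝ) (x : Fin n → ℝ) :
    HasDerivAt (fun s => u s x) (fderiv ℝ (uncurry u) (t, x) (1, 0)) t :=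
  (hu (t, x)).hasFDerivAt.comp_hasDerivAt (f := fun s => (s, x)) t
    ((hasDerivAt_id t).prodMk (hasDerivAt_const t x))

theorem uncurry_timeDeriv_eq_fderiv (hu : Differentiable ℝ (uncurry u)) :
    uncurry (timeDeriv u) = fun p => fderiv ℝ (uncurry u) p (1, 0) :=
  funext fun p => (hasDerivAt_time_slice hu p.1 p.2).deriv

theorem ContDiff.uncurry_timeDeriv {m : ℕ} (hu : ContDiff ℝ (m + 1) (uncurry u)) :
    ContDiff ℝ m (uncurry (timeDeriv u)) := by
  rw [uncurry_timeDeriv_eq_fderiv (hu.differentiable (by simp))]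
  exact (hu.fderiv_right le_rfl).clm_apply contDiff_const

theorem ContDiff.uncurry_apply {m : ℕ} (hu : ContDiff ℝ m (uncurry u)) (t : ℝ) :
    ContDiff ℝ m (u t) :=
  hu.comp (contDiff_const.prodMk contDiff_id)

theorem timeDeriv_add_const_mul (hu : Differentiable ℝ (uncurry u))
    (hv : Differentiable ℝ (uncurry v)) (k : ℝ) :
    timeDeriv (fun s y => u s y + k * v s y) =
      fun s y => timeDeriv u s y + k * timeDeriv v s y := by
  funext t x
  have hv' : DifferentiableAt ℝ (fun s => k * v s x) t :=
    (hasDerivAt_time_slice hv t x).differentiableAt.const_mul k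
  rw [timeDeriv, deriv_fun_add (hasDerivAt_time_slice hu t x).differentiableAt hv',
    deriv_const_mul_field]
  rfl

end Slices

theorem lap_add_const_mul {n : ℕ} {f g : (Fin n → ℝ) → ℝ} (hf : ContDiff ℝ 2 f)
    (hg : ContDiff ℝ 2 g) (k : ℝ) (x : Fin n → ℝ) :
    lap (fun y => f y + k * g y) x = lap f x + k * lap g x := by
  simp only [lap, Finset.mul_sum, ← Finset.sum_add_distrib]
  refine Finset.sum_congr rfl fun i _ => ?_
  have hslice {h : (Fin n → ℝ) → ℝ} (hh : ContDiff ℝ 2 h) :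
      ContDiffAt ℝ 2 (fun s => h (update x i s)) (x i) :=
    (hh.comp (contDiff_update 2 x i)).contDiffAt
  rw [iteratedDeriv_fun_add (hslice hf) (hslice (contDiff_const.mul hg)),
    iteratedDeriv_const_mul_field]

theorem jmgt_second_sound_general
    (n : ℕ) (τ δ c b k γ : ℝ)
    (hτ : 0 < τ) (hδ : 0 < δ)
    (hb : b = δ + τ * c ^ 2) (hk : k = c ^ 2 / b) (hγ : γ = 1 / τ - k)
    (ψ : ℝ → (Fin n → ℝ) → ℝ)
    (hψ : ContDiff ℝ 3 (fun p : ℝ × (Fin n → ℝ) => ψ p.1 p.2))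
    (hpde : ∀ (t : ℝ) (x : Fin n → ℝ),
      τ * timeDeriv (timeDeriv (timeDeriv ψ)) t x + timeDeriv (timeDeriv ψ) t x
        - c ^ 2 * lap (ψ t) x - b * lap (timeDeriv ψ t) x = 0) :
    0 < γ ∧
    ∀ (t : ℝ) (x : Fin n → ℝ),
      timeDeriv (timeDeriv (fun s y => timeDeriv ψ s y + k * ψ s y)) t x
        - (c ^ 2 + δ / τ) * lap (fun y => timeDeriv ψ t y + k * ψ t y) x
        + γ * timeDeriv (fun s y => timeDeriv ψ s y + k * ψ s y) t x
      = γ * k * ((timeDeriv ψ t x + k * ψ t x) - k * ψ t x) := by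
  have hb_pos : 0 < b := by rw [hb]; positivity
  refine ⟨?_, fun t x => ?_⟩
  · rw [hγ, hk, sub_pos, div_lt_div_iff₀ hb_pos hτ, hb]
    linarith
  have hkb : k * b = c ^ 2 := by rw [hk]; field_simp
  have hspeed : c ^ 2 + δ / τ = b / τ := by rw [hb]; field_simp; ring
  have hψ0 : ContDiff ℝ 3 (uncurry ψ) := hψ
  have hψ1 : ContDiff ℝ 2 (uncurry (timeDeriv ψ)) := hψ0.uncurry_timeDeriv
  have hψ2 : ContDiff ℝ 1 (uncurry (timeDeriv (timeDeriv ψ))) := hψ1.uncurry_timeDeriv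
  rw [timeDeriv_add_const_mul (hψ1.differentiable two_ne_zero) (hψ0.differentiable three_ne_zero),
    timeDeriv_add_const_mul (hψ2.differentiable one_ne_zero) (hψ1.differentiable two_ne_zero),
    lap_add_const_mul (hψ1.uncurry_apply t) ((hψ0.uncurry_apply t).of_le (by norm_num)),
    hγ, hspeed]
  field_simp
  linear_combination hpde t x - lap (ψ t) x * hkb

/-- Second-sound (thermal wave) reformulation of the linear
Jordan–Moore–Gibson–Thompson equation: if `ψ` solves
`τ ψ_ttt + ψ_tt − c² Δψ − b Δψ_t = 0` with `b = δ + τc²`, `k = c²/b`,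
`γ = 1/τ − k`, then `γ > 0` and `z := ψ_t + k ψ` solves the weakly damped
wave equation `z_tt − (c² + δ/τ) Δz + γ z_t = γ k (z − k ψ)`. -/
theorem jmgt_second_sound
    (n : ℕ) (hn : 1 ≤ n) (τ δ c b k γ : ℝ)
    (hτ : 0 < τ) (hδ : 0 < δ) (hc : 0 < c)
    (hb : b = δ + τ * c ^ 2) (hk : k = c ^ 2 / b) (hγ : γ = 1 / τ - k)
    (ψ : ℝ → (Fin n → ℝ) → ℝ)
    (hψ : ContDiff ℝ 3 (fun p : ℝ × (Fin n → ℝ) => ψ p.1 p.2))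
    (hpde : ∀ (t : ℝ) (x : Fin n → ℝ),
      τ * timeDeriv (timeDeriv (timeDeriv ψ)) t x + timeDeriv (timeDeriv ψ) t x
        - c ^ 2 * lap (ψ t) x - b * lap (timeDeriv ψ t) x = 0) :
    0 < γ ∧
    ∀ (t : ℝ) (x : Fin n → ℝ),
      timeDeriv (timeDeriv (fun s y => timeDeriv ψ s y + k * ψ s y)) t x
        - (c ^ 2 + δ / τ) * lap (fun y => timeDeriv ψ t y + k * ψ t y) x
        + γ * timeDeriv (fun s y => timeDeriv ψ s y + k * ψ s y) t x
      = γ * k * ((timeDeriv ψ t x + k * ψ t x) - k * ψ t x) :=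
  jmgt_second_sound_general n τ δ c b k γ hτ hδ hb hk hγ ψ hψ hpde
end
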